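/- Define f : (0, 1/2] → (0,∞) by f(r) := r^{(1/√k) − (1/2)} for r ∈ (2^{-k-1}, 2^{-k}], k ≥ 1. Then: (a) ∫₀^{(1/2)^{1/4}} ( f(u⁴) )^{1/2} du < ∞; but (b) for every α ∈ (0, 1/2), the series Σ_{k≥1} exp( 2·f(2^{-k}) ) · exp( −2^{αk} ) diverges (indeed its terms tend to infinity). -/
import Mathlib


open MeasureTheory Filter Set
open scoped ENNReal Topology

/-- The index `k` with `r ∈ (2^{-k-1}, 2^{-k}]` (for `r ∈ (0, 1/2]`). -/
noncomputable def kOf (r : ℝ) : ℕ := ⌊Real.logb 2 r⁻¹⌋₊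

/-- The function `f(r) = r^{1/√k - 1/2}` for `r ∈ (2^{-k-1}, 2^{-k}]`. -/
noncomputable def ffun (r : ℝ) : ℝ := r ^ (1 / Real.sqrt (kOf r : ℝ) - 1 / 2)

lemma kOf_eq {k : ℕ} {r : ℝ} (h1 : (2:ℝ) ^ (-((k:ℝ)+1)) < r) (h2 : r ≤ (2:ℝ) ^ (-(k:ℝ))) :
    kOf r = k := by
  have hr : 0 < r := lt_trans (Real.rpow_pos_of_pos two_pos _) h1
  have hinv1 : (2:ℝ) ^ ((k:ℝ)) ≤ r⁻¹ := by
    rw [Real.rpow_neg (by norm_num)] at h2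
    exact (le_inv_comm₀ (Real.rpow_pos_of_pos two_pos _) hr).mpr h2
  have hinv2 : r⁻¹ < (2:ℝ) ^ ((k:ℝ)+1) := by
    rw [Real.rpow_neg (by norm_num)] at h1
    exact (inv_lt_comm₀ hr (Real.rpow_pos_of_pos two_pos _)).mpr h1
  have hlb : (k:ℝ) ≤ Real.logb 2 r⁻¹ := by
    have := Real.logb_le_logb_of_le one_lt_two (Real.rpow_pos_of_pos two_pos _) hinv1
    rwa [Real.logb_rpow two_pos (by norm_num)] at this
  have hub : Real.logb 2 r⁻¹ < (k:ℝ) + 1 := by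
    have := Real.logb_lt_logb one_lt_two (inv_pos.mpr hr) hinv2
    rwa [Real.logb_rpow two_pos (by norm_num)] at this
  rw [kOf, Nat.floor_eq_iff (le_trans (Nat.cast_nonneg k) hlb)]
  exact ⟨hlb, by exact_mod_cast hub⟩

-- x^5/120 ≤ exp x for x ≥ 0
lemma pow5_le_exp {x : ℝ} (hx : 0 ≤ x) : x ^ 5 / 120 ≤ Real.exp x := by
  have h := Real.sum_le_exp_of_nonneg hx 6
  have h5 : x ^ 5 / (Nat.factorial 5 : ℝ) ≤ ∑ i ∈ Finset.range 6, x ^ i / (Nat.factorial i : ℝ) := by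
    apply Finset.single_le_sum (f := fun i => x ^ i / (Nat.factorial i : ℝ))
    · intro i _
      positivity
    · simp
  simpa [Nat.factorial] using h5.trans h

lemma summable_exp_neg_sqrt {c : ℝ} (hc : 0 < c) :
    Summable (fun n : ℕ => Real.exp (-(c * Real.sqrt ((n:ℝ)+1)))) := by
  have key : ∀ n : ℕ, Real.exp (-(c * Real.sqrt ((n:ℝ)+1))) ≤
      (120 / c ^ 5) * (1 / ((n:ℝ)+1) ^ 2) := by
    intro n
    set s := Real.sqrt ((n:ℝ)+1) with hs
    have hs2 : s ^ 2 = (n:ℝ)+1 := Real.sq_sqrt (by positivity)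
    have hs0 : 0 ≤ s := Real.sqrt_nonneg _
    have hs1 : 1 ≤ s := by nlinarith [Nat.cast_nonneg (α := ℝ) n]
    have hlow : c ^ 5 * ((n:ℝ)+1) ^ 2 / 120 ≤ Real.exp (c * s) := by
      refine le_trans ?_ (pow5_le_exp (by positivity))
      have : (c * s) ^ 5 = c ^ 5 * ((n:ℝ)+1) ^ 2 * s := by
        rw [mul_pow]; ring_nf; rw [show s ^ 5 = (s ^ 2) ^ 2 * s by ring, hs2]; ring
      rw [this]
      have h1 : c ^ 5 * ((n:ℝ)+1) ^ 2 ≤ c ^ 5 * ((n:ℝ)+1) ^ 2 * s := by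
        nlinarith [mul_pos (pow_pos hc 5) (pow_pos (show (0:ℝ) < (n:ℝ)+1 by positivity) 2)]
      linarith
    have hpos : 0 < c ^ 5 * ((n:ℝ)+1) ^ 2 / 120 := by positivity
    rw [Real.exp_neg]
    calc (Real.exp (c*s))⁻¹ ≤ (c ^ 5 * ((n:ℝ)+1) ^ 2 / 120)⁻¹ :=
          inv_anti₀ hpos hlow
    _ = (120 / c ^ 5) * (1 / ((n:ℝ)+1) ^ 2) := by field_simp
  refine Summable.of_nonneg_of_le (fun n => (Real.exp_pos _).le) key ?_
  have h2 : Summable (fun n : ℕ => 1 / ((n:ℝ)+1) ^ 2) := by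
    have := (summable_nat_add_iff (f := fun n : ℕ => 1 / (n:ℝ) ^ 2) 1).mpr
      ((Real.summable_one_div_nat_pow (p := 2)).mpr one_lt_two)
    simpa using this
  exact h2.mul_left _

lemma ffun_dyadic (k : ℕ) :
    ffun ((2:ℝ) ^ (-((k:ℝ)+1))) = (2:ℝ) ^ (((k:ℝ)+1)/2 - Real.sqrt ((k:ℝ)+1)) := by
  have hc : (((k+1 : ℕ)):ℝ) = (k:ℝ) + 1 := by push_cast; ring
  have hk : kOf ((2:ℝ) ^ (-((k:ℝ)+1))) = k + 1 := by
    apply kOf_eq (k := k+1)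
    · rw [hc]
      exact (Real.rpow_lt_rpow_left_iff one_lt_two).mpr (by linarith)
    · rw [hc]
  rw [ffun, hk, ← Real.rpow_mul (by norm_num : (0:ℝ) ≤ 2)]
  congr 1
  rw [hc]
  set m : ℝ := (k:ℝ) + 1 with hm
  have hm0 : (0:ℝ) < m := by positivity
  have hsq : Real.sqrt m ≠ 0 := by positivity
  have : -m * (1 / Real.sqrt m - 1 / 2) = m / 2 - m / Real.sqrt m := by
    ring
  rw [this, Real.div_sqrt]

lemma part_b_tendsto {α : ℝ} (hα0 : 0 < α) (hα2 : α < 1/2) :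
    Tendsto (fun k : ℕ =>
        Real.exp (2 * ffun ((2 : ℝ) ^ (-((k : ℝ) + 1)))) *
          Real.exp (-(2 : ℝ) ^ (α * ((k : ℝ) + 1)))) atTop atTop := by
  simp only [ffun_dyadic, ← Real.exp_add]
  apply Real.tendsto_exp_atTop.comp
  -- inner function tends to atTop
  have hβ : 0 < 1/2 - α := by linarith
  obtain ⟨N, hN⟩ := exists_nat_ge (max 16 ((1/(1/2-α))^2))
  apply tendsto_atTop_mono' atTop
    (show ∀ᶠ k : ℕ in atTop, (2:ℝ) ^ (((k:ℝ)+1)/4) ≤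
      2 * (2:ℝ) ^ (((k:ℝ)+1)/2 - Real.sqrt ((k:ℝ)+1)) + -(2:ℝ) ^ (α * ((k:ℝ)+1)) from ?_) ?_
  · filter_upwards [eventually_ge_atTop N] with k hk
    set m : ℝ := (k:ℝ) + 1 with hm
    have hmN : (N:ℝ) ≤ m := by
      have : (N:ℝ) ≤ (k:ℝ) := by exact_mod_cast hk
      linarith
    have hm16 : (16:ℝ) ≤ m := le_trans (le_trans (le_max_left _ _) hN) hmN
    have hmα : (1/(1/2-α))^2 ≤ m := le_trans (le_trans (le_max_right _ _) hN) hmN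
    set s : ℝ := Real.sqrt m with hs
    have hs0 : 0 ≤ s := Real.sqrt_nonneg _
    have hs2 : s ^ 2 = m := Real.sq_sqrt (by linarith)
    -- (i) : α * m ≤ m/2 - s
    have hsge : 1/(1/2-α) ≤ s := by
      rw [hs]
      calc 1/(1/2-α) = Real.sqrt ((1/(1/2-α))^2) := (Real.sqrt_sq (by positivity)).symm
      _ ≤ Real.sqrt m := Real.sqrt_le_sqrt hmα
    have hβs : 1 ≤ (1/2 - α) * s := by
      rw [div_le_iff₀ hβ] at hsge
      linarith [hsge]
    have h1 : α * m ≤ m/2 - s := by nlinarith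
    -- (ii) : s ≤ m/4
    have h2 : s ≤ m/4 := by nlinarith
    have hA : (2:ℝ) ^ (α * m) ≤ (2:ℝ) ^ (m/2 - s) :=
      (Real.rpow_le_rpow_left_iff one_lt_two).mpr h1
    have hB : (2:ℝ) ^ (m/4) ≤ (2:ℝ) ^ (m/2 - s) :=
      (Real.rpow_le_rpow_left_iff one_lt_two).mpr (by linarith)
    linarith
  · -- 2 ^ ((k+1)/4) → atTop
    have hbase : Tendsto (fun x : ℝ => (2:ℝ) ^ x) atTop atTop := by
      simp_rw [Real.rpow_def_of_pos two_pos]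
      exact Real.tendsto_exp_atTop.comp
        (Tendsto.const_mul_atTop (Real.log_pos one_lt_two) tendsto_id)
    apply hbase.comp
    apply Tendsto.atTop_div_const (by norm_num)
    exact tendsto_atTop_add_const_right _ _ tendsto_natCast_atTop_atTop

noncomputable def rr : ℝ := (2:ℝ) ^ (-(1:ℝ)/4)

lemma rr_pos : 0 < rr := Real.rpow_pos_of_pos two_pos _

lemma rr_lt_one : rr < 1 :=
  Real.rpow_lt_one_of_one_lt_of_neg one_lt_two (by norm_num)

lemma rr_pow (n : ℕ) : rr ^ n = (2:ℝ) ^ (-(n:ℝ)/4) := by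
  rw [rr, ← Real.rpow_natCast ((2:ℝ) ^ (-(1:ℝ)/4)) n, ← Real.rpow_mul (by norm_num)]
  congr 1; ring

lemma rr_pow4 (n : ℕ) : (rr ^ n) ^ 4 = (2:ℝ) ^ (-(n:ℝ)) := by
  rw [rr_pow, ← Real.rpow_natCast ((2:ℝ) ^ (-(n:ℝ)/4)) 4, ← Real.rpow_mul (by norm_num)]
  congr 1; push_cast; ring

lemma cover : Ioc (0:ℝ) ((1/2:ℝ) ^ ((1:ℝ)/4)) ⊆ ⋃ n : ℕ, Ioc (rr ^ (n+2)) (rr ^ (n+1)) := by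
  have hc_eq : (1/2:ℝ) ^ ((1:ℝ)/4) = rr := by
    rw [rr, show (1/2:ℝ) = (2:ℝ) ^ (-1:ℝ) by rw [Real.rpow_neg_one]; norm_num,
      ← Real.rpow_mul (by norm_num)]
    congr 1; ring
  rintro u ⟨hu0, huc⟩
  rw [hc_eq] at huc
  have hex : ∃ j : ℕ, rr ^ j < u := exists_pow_lt_of_lt_one hu0 rr_lt_one
  set K := Nat.find hex with hK
  have hKlt : rr ^ K < u := Nat.find_spec hex
  have hmin : ∀ i < K, u ≤ rr ^ i := fun i hi => le_of_not_gt (Nat.find_min hex hi)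
  have hK2 : 2 ≤ K := by
    by_contra h
    interval_cases K
    · simp at hKlt
      nlinarith [rr_lt_one]
    · nlinarith [hKlt, huc]
  refine mem_iUnion.2 ⟨K - 2, ?_⟩
  have h1 : K - 2 + 2 = K := by omega
  have h2 : K - 2 + 1 = K - 1 := by omega
  rw [h1, h2]
  exact ⟨hKlt, hmin (K-1) (by omega)⟩

lemma piece (n : ℕ) :
    ∫⁻ u in Ioc (rr ^ (n+2)) (rr ^ (n+1)), ENNReal.ofReal (Real.sqrt (ffun (u ^ 4))) ≤
      ENNReal.ofReal ((2:ℝ) ^ ((1:ℝ)/4) * (2:ℝ) ^ (-(Real.sqrt ((n:ℝ)+1))/2)) := by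
  set k := n + 1 with hkdef
  have hkc : (k:ℝ) = (n:ℝ) + 1 := by push_cast [hkdef]; ring
  have hk0 : (0:ℝ) < (k:ℝ) := by rw [hkc]; positivity
  have hsq : (0:ℝ) < Real.sqrt (k:ℝ) := Real.sqrt_pos.mpr hk0
  set C : ℝ := (2:ℝ) ^ (((k:ℝ)+1)/4) * (2:ℝ) ^ (-(Real.sqrt (k:ℝ))/2) with hC
  have hC0 : 0 ≤ C := by positivity
  have hbound : ∀ u ∈ Ioc (rr ^ (k+1)) (rr ^ k), Real.sqrt (ffun (u ^ 4)) ≤ C := by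
    rintro u ⟨hul, huu⟩
    have hu0 : 0 < u := lt_trans (pow_pos rr_pos _) hul
    have h4u : u ^ 4 ≤ (2:ℝ) ^ (-(k:ℝ)) := by
      rw [← rr_pow4]; exact pow_le_pow_left₀ hu0.le huu 4
    have h4l : (2:ℝ) ^ (-((k:ℝ)+1)) < u ^ 4 := by
      have h := pow_lt_pow_left₀ hul (pow_nonneg rr_pos.le _) (by norm_num : 4 ≠ 0)
      rw [rr_pow4] at h
      have : -(((k+1:ℕ)):ℝ) = -((k:ℝ)+1) := by push_cast; ring
      rwa [this] at h
    have hkOf : kOf (u ^ 4) = k := kOf_eq h4l h4u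
    have hs : Real.sqrt (ffun (u ^ 4)) = u ^ (2 / Real.sqrt (k:ℝ) - 1) := by
      rw [ffun, hkOf, Real.sqrt_eq_rpow, ← Real.rpow_natCast u 4,
        ← Real.rpow_mul hu0.le, ← Real.rpow_mul hu0.le]
      congr 1
      push_cast; ring
    have hsplit : u ^ (2 / Real.sqrt (k:ℝ) - 1) =
        u ^ (2 / Real.sqrt (k:ℝ)) * u⁻¹ := by
      rw [← Real.rpow_neg_one u, ← Real.rpow_add hu0, sub_eq_add_neg]
    have h1 : u ^ (2 / Real.sqrt (k:ℝ)) ≤ (2:ℝ) ^ (-(Real.sqrt (k:ℝ))/2) := by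
      calc u ^ (2 / Real.sqrt (k:ℝ)) ≤ (rr ^ k) ^ (2 / Real.sqrt (k:ℝ)) :=
            Real.rpow_le_rpow hu0.le huu (by positivity)
      _ = (2:ℝ) ^ (-(Real.sqrt (k:ℝ))/2) := by
          rw [rr_pow, ← Real.rpow_mul (by norm_num)]
          congr 1
          rw [show -(k:ℝ)/4 * (2 / Real.sqrt (k:ℝ)) = -((k:ℝ) / Real.sqrt (k:ℝ))/2 by ring,
            Real.div_sqrt]
    have h2 : u⁻¹ ≤ (2:ℝ) ^ (((k:ℝ)+1)/4) := by
      refine le_trans (inv_anti₀ (pow_pos rr_pos _) hul.le) (le_of_eq ?_)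
      rw [rr_pow, ← Real.rpow_neg (by norm_num : (0:ℝ) ≤ 2)]
      congr 1; push_cast; ring
    calc Real.sqrt (ffun (u ^ 4)) = u ^ (2 / Real.sqrt (k:ℝ)) * u⁻¹ := by rw [hs, hsplit]
    _ ≤ (2:ℝ) ^ (-(Real.sqrt (k:ℝ))/2) * (2:ℝ) ^ (((k:ℝ)+1)/4) :=
        mul_le_mul h1 h2 (inv_nonneg.mpr hu0.le) (by positivity)
    _ = C := by rw [hC]; ring
  calc ∫⁻ u in Ioc (rr ^ (k+1)) (rr ^ k), ENNReal.ofReal (Real.sqrt (ffun (u ^ 4)))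
      ≤ ∫⁻ _ in Ioc (rr ^ (k+1)) (rr ^ k), ENNReal.ofReal C :=
        setLIntegral_mono measurable_const (fun u hu => ENNReal.ofReal_le_ofReal (hbound u hu))
  _ = ENNReal.ofReal C * volume (Ioc (rr ^ (k+1)) (rr ^ k)) := setLIntegral_const _ _
  _ ≤ ENNReal.ofReal C * ENNReal.ofReal (rr ^ k) := by
      gcongr
      rw [Real.volume_Ioc]
      exact ENNReal.ofReal_le_ofReal (by nlinarith [pow_pos rr_pos (k+1)])
  _ = ENNReal.ofReal (C * rr ^ k) := (ENNReal.ofReal_mul hC0).symm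
  _ = ENNReal.ofReal ((2:ℝ) ^ ((1:ℝ)/4) * (2:ℝ) ^ (-(Real.sqrt ((n:ℝ)+1))/2)) := by
      congr 1
      rw [hC, rr_pow, ← hkc]
      rw [show ((2:ℝ) ^ (((k:ℝ)+1)/4) * (2:ℝ) ^ (-(Real.sqrt ((k:ℝ)))/2)) * (2:ℝ) ^ (-(k:ℝ)/4)
        = ((2:ℝ) ^ (((k:ℝ)+1)/4) * (2:ℝ) ^ (-(k:ℝ)/4)) * (2:ℝ) ^ (-(Real.sqrt ((k:ℝ)))/2) by ring,
        ← Real.rpow_add two_pos]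
      congr 2
      ring

/-- (Remark: Dudley's entropy-integral condition is strictly weaker than the summability
condition.) With `f(r) = r^{1/√k - 1/2}` for `r ∈ (2^{-k-1}, 2^{-k}]`, `k ≥ 1`:
(a) `∫₀^{(1/2)^{1/4}} (f(u⁴))^{1/2} du < ∞`; but
(b) for every `α ∈ (0,1/2)` the series `Σ_{k ≥ 1} exp(2 f(2^{-k})) exp(-2^{αk})` diverges —
indeed its terms tend to infinity. -/
theorem stmt17 :
    (∫⁻ u in Set.Ioc (0 : ℝ) ((1 / 2 : ℝ) ^ ((1 : ℝ) / 4)),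
        ENNReal.ofReal (Real.sqrt (ffun (u ^ 4))) < ⊤) ∧
    (∀ α : ℝ, α ∈ Set.Ioo (0 : ℝ) (1 / 2) →
      ¬ Summable (fun k : ℕ =>
          Real.exp (2 * ffun ((2 : ℝ) ^ (-((k : ℝ) + 1)))) *
            Real.exp (-(2 : ℝ) ^ (α * ((k : ℝ) + 1)))) ∧
      Tendsto (fun k : ℕ =>
          Real.exp (2 * ffun ((2 : ℝ) ^ (-((k : ℝ) + 1)))) *
            Real.exp (-(2 : ℝ) ^ (α * ((k : ℝ) + 1)))) atTop atTop) := by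
  constructor
  · have hsum : Summable
        (fun n : ℕ => (2:ℝ) ^ ((1:ℝ)/4) * (2:ℝ) ^ (-(Real.sqrt ((n:ℝ)+1))/2)) := by
      have hc : 0 < Real.log 2 / 2 := by positivity
      have h := (summable_exp_neg_sqrt hc).mul_left ((2:ℝ) ^ ((1:ℝ)/4))
      refine h.congr fun n => ?_
      rw [Real.rpow_def_of_pos two_pos (-(Real.sqrt ((n:ℝ)+1))/2)]
      congr 1; ring
    calc ∫⁻ u in Set.Ioc (0 : ℝ) ((1 / 2 : ℝ) ^ ((1 : ℝ) / 4)),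
          ENNReal.ofReal (Real.sqrt (ffun (u ^ 4)))
        ≤ ∫⁻ u in ⋃ n : ℕ, Ioc (rr ^ (n+2)) (rr ^ (n+1)),
          ENNReal.ofReal (Real.sqrt (ffun (u ^ 4))) := lintegral_mono_set cover
    _ ≤ ∑' n : ℕ, ∫⁻ u in Ioc (rr ^ (n+2)) (rr ^ (n+1)),
          ENNReal.ofReal (Real.sqrt (ffun (u ^ 4))) := lintegral_iUnion_le _ _
    _ ≤ ∑' n : ℕ, ENNReal.ofReal ((2:ℝ) ^ ((1:ℝ)/4) * (2:ℝ) ^ (-(Real.sqrt ((n:ℝ)+1))/2)) :=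
          ENNReal.tsum_le_tsum piece
    _ < ⊤ := by
        rw [← ENNReal.ofReal_tsum_of_nonneg (fun n => by positivity) hsum]
        exact ENNReal.ofReal_lt_top
  · rintro α ⟨hα0, hα2⟩
    have ht := part_b_tendsto hα0 hα2
    exact ⟨fun h => not_tendsto_nhds_of_tendsto_atTop ht 0 h.tendsto_atTop_zero, ht⟩
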